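/- An indexed forest F with support in the positive integers is a single indexed linear tree (its internal nodes form a path) if and only if the support of the vector c(F) is an interval of positive integers, if and only if the left support of F (the set of canonical labels of nodes whose left child is a leaf) is an interval of positive integers. -/

import Mathlib

/-- Plane binary trees. `leaf` is a leaf, `node l r` an internal node. -/
inductive BT where
  | leaf : BT
  | node : BT → BT → BT
deriving DecidableEq

/-- Number of internal nodes. -/
def BT.size : BT → ℕ
  | .leaf => 0
  | .node l r => l.size + r.size + 1

/-- Multiset of values `ρ_F(v)` (canonical label of the leftmost descendant,
reached by following left edges) over the internal nodes of a tree whose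
inorder canonical labels start at `a`. -/
def BT.rhoMS : BT → ℤ → Multiset ℤ
  | .leaf, _ => 0
  | .node l r, a => a ::ₘ (l.rhoMS a + r.rhoMS (a + l.size + 1))

/-- Multiset of canonical labels of internal nodes whose left child is a leaf
("left support"). -/
def BT.lsuppMS : BT → ℤ → Multiset ℤ
  | .leaf, _ => 0
  | .node l r, a =>
      (if l = BT.leaf then ({a} : Multiset ℤ) else 0) + l.lsuppMS a
        + r.lsuppMS (a + l.size + 1)

/-- The flagged generating polynomial of a binary tree with inorder labels
starting at `a`, where every label is at least `lo` (lower bound transmitted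
from the parent), at most the `ρ`-value of the node, labels weakly increase
down left edges and strictly increase down right edges. The variables are
`x_1, x_2, …` (the variable `X 0` is unused). -/
noncomputable def BT.polyAux : BT → ℤ → ℕ → MvPolynomial ℕ ℚ
  | .leaf, _, _ => 1
  | .node l r, a, lo =>
      ∑ k ∈ Finset.Icc lo a.toNat,
        MvPolynomial.X k * l.polyAux a k * r.polyAux (a + l.size + 1) (k + 1)

/-- The forest polynomial of a single indexed tree with support starting at `a`. -/
noncomputable def BT.poly (t : BT) (a : ℤ) : MvPolynomial ℕ ℚ := t.polyAux a 1

/-- An indexed forest: a list of binary trees together with the starting points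
of their supports, the supports being maximal intervals (consecutive supports
leave a gap of at least one integer). -/
structure IndexedForest where
  trees : List (ℤ × BT)
  nonempty : ∀ p ∈ trees, p.2 ≠ BT.leaf
  gaps : trees.Chain' (fun p q => p.1 + (p.2.size : ℤ) + 1 ≤ q.1)

/-- The support of an indexed forest, as a set of integers. -/
def IndexedForest.Supp (F : IndexedForest) : Set ℤ :=
  {i | ∃ p ∈ F.trees, p.1 ≤ i ∧ i < p.1 + (p.2.size : ℤ)}

/-- The multiset of `ρ_F`-values of all internal nodes of `F`. -/
def IndexedForest.rhoMS (F : IndexedForest) : Multiset ℤ :=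
  (F.trees.map (fun p => p.2.rhoMS p.1)).sum

/-- The `ℕ`-vector `c(F)`: `c_i` counts internal nodes with `ρ_F`-value `i`. -/
def cOf (F : IndexedForest) : ℤ → ℕ := fun i => F.rhoMS.count i

/-- The multiset of left-support labels of `F`. -/
def IndexedForest.lsuppMS (F : IndexedForest) : Multiset ℤ :=
  (F.trees.map (fun p => p.2.lsuppMS p.1)).sum

/-- Forest polynomial of a list of located trees. -/
noncomputable def polyL (ts : List (ℤ × BT)) : MvPolynomial ℕ ℚ :=
  (ts.map (fun p => p.2.poly p.1)).prod

/-- The forest polynomial of an indexed forest. -/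
noncomputable def IndexedForest.poly (F : IndexedForest) : MvPolynomial ℕ ℚ :=
  polyL F.trees

/-- Number of internal nodes of a forest. -/
def IndexedForest.size (F : IndexedForest) : ℕ :=
  (F.trees.map (fun p => p.2.size)).sum

/-- A linear binary tree: the internal nodes form a path (every internal node
has at most one internal-node child). -/
def BT.linear : BT → Prop
  | .leaf => True
  | .node l r => (l = BT.leaf ∨ r = BT.leaf) ∧ l.linear ∧ r.linear


/-!
A node whose left child is a leaf is its own leftmost descendant, and every leftmost descendant
is such a node, so the support of `c(F)` and the left support of `F` are the same set of labels:
only the `ρ`-values matter. Every tree contributes `ρ`-values inside its own support, among them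
its first label, and consecutive supports are separated by a gap, so an interval of `ρ`-values
forces a single tree. Inside a tree, the root label `a + |l|` is a `ρ`-value only when the left
subtree is a leaf; if both subtrees are internal it separates the `ρ`-values `a` and
`a + |l| + 1` of the two subtrees. Since the `ρ`-values of either subtree are those of the whole
tree on one side of the root label, induction shows that they form an interval exactly when the
tree is linear.
-/

theorem Set.Finite.exists_eq_Icc_iff {α : Type*} [ConditionallyCompleteLinearOrder α]
    {s : Set α} {c : α} (hs : s.Finite) (hc : s ⊆ Set.Ici c) :
    (∃ a b, c ≤ a ∧ a ≤ b ∧ s = Set.Icc a b) ↔ s.Nonempty ∧ s.OrdConnected := by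
  constructor
  · rintro ⟨a, b, -, hab, rfl⟩
    exact ⟨Set.nonempty_Icc.2 hab, Set.ordConnected_Icc⟩
  · rintro ⟨hne, hoc⟩
    refine ⟨sInf s, sSup s, hc (hne.csInf_mem hs),
      csInf_le_csSup hne hs.bddBelow hs.bddAbove, ?_⟩
    exact (subset_Icc_csInf_csSup hs.bddBelow hs.bddAbove).antisymm
      (hoc.out (hne.csInf_mem hs) (hne.csSup_mem hs))

namespace BT

theorem size_pos {t : BT} (ht : t ≠ leaf) : 0 < t.size := by
  cases t with
  | leaf => exact absurd rfl ht
  | node l r => simp [size]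

theorem mem_rhoMS_self {t : BT} (ht : t ≠ leaf) (a : ℤ) : a ∈ t.rhoMS a := by
  cases t with
  | leaf => exact absurd rfl ht
  | node l r => simp [rhoMS]

theorem rhoMS_bounds {t : BT} {a x : ℤ} (hx : x ∈ t.rhoMS a) : a ≤ x ∧ x < a + t.size := by
  induction t generalizing a with
  | leaf => simp [rhoMS] at hx
  | node l r ihl ihr =>
    simp only [rhoMS, Multiset.mem_cons, Multiset.mem_add] at hx
    simp only [size]
    push_cast
    rcases hx with rfl | hx | hx
    · omega
    · have := ihl hx; omega
    · have := ihr hx; omega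

theorem mem_rhoMS_iff_mem_lsuppMS {t : BT} {a x : ℤ} : x ∈ t.rhoMS a ↔ x ∈ t.lsuppMS a := by
  induction t generalizing a x with
  | leaf => simp [rhoMS, lsuppMS]
  | node l r ihl ihr =>
    by_cases hl : l = leaf
    · subst hl
      simp [rhoMS, lsuppMS, ihr]
    · have := ihl.1 (mem_rhoMS_self hl a)
      rcases eq_or_ne x a with rfl | hx <;> simp [rhoMS, lsuppMS, *]

theorem mem_rhoMS_left {l r : BT} {a x : ℤ} :
    x ∈ l.rhoMS a ↔ x ∈ (node l r).rhoMS a ∧ x < a + l.size := by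
  simp only [rhoMS, Multiset.mem_cons, Multiset.mem_add]
  constructor
  · intro hx
    exact ⟨Or.inr (Or.inl hx), (rhoMS_bounds hx).2⟩
  · rintro ⟨rfl | hx | hx, hlt⟩
    · exact mem_rhoMS_self (fun hl => by simp [hl, size] at hlt) x
    · exact hx
    · have := rhoMS_bounds hx; omega

theorem mem_rhoMS_right {l r : BT} {a x : ℤ} :
    x ∈ r.rhoMS (a + l.size + 1) ↔ x ∈ (node l r).rhoMS a ∧ a + l.size < x := by
  simp only [rhoMS, Multiset.mem_cons, Multiset.mem_add]
  constructor
  · intro hx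
    have := rhoMS_bounds hx
    exact ⟨Or.inr (Or.inr hx), by omega⟩
  · rintro ⟨rfl | hx | hx, hlt⟩
    · omega
    · have := rhoMS_bounds hx; omega
    · exact hx

theorem rhoMS_eq_Icc_of_linear {t : BT} (hlin : t.linear) (ht : t ≠ leaf) (a : ℤ) :
    ∃ b, {x | x ∈ t.rhoMS a} = Set.Icc a b := by
  induction t generalizing a with
  | leaf => exact absurd rfl ht
  | node l r ihl ihr =>
    obtain ⟨rfl | rfl, hl, hr⟩ := hlin
    · by_cases hrl : r = leaf
      · subst hrl
        exact ⟨a, by ext; simp [rhoMS]⟩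
      · obtain ⟨b, hb⟩ := ihr hr hrl (a + 1)
        have hab := ((Set.ext_iff.1 hb (a + 1)).1 (mem_rhoMS_self hrl (a + 1))).2
        refine ⟨b, Set.ext fun x => ?_⟩
        have hx : x ∈ r.rhoMS (a + 1) ↔ a + 1 ≤ x ∧ x ≤ b := Set.ext_iff.1 hb x
        simp only [Set.mem_ofPred_eq, rhoMS, size, Multiset.mem_cons, Multiset.mem_add,
          Multiset.notMem_zero, false_or, Set.mem_Icc, Nat.cast_zero, add_zero, hx]
        omega
    · by_cases hll : l = leaf
      · subst hll
        exact ⟨a, by ext; simp [rhoMS]⟩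
      · obtain ⟨b, hb⟩ := ihl hl hll a
        have hab := ((Set.ext_iff.1 hb a).1 (mem_rhoMS_self hll a)).2
        refine ⟨b, Set.ext fun x => ?_⟩
        have hx : x ∈ l.rhoMS a ↔ a ≤ x ∧ x ≤ b := Set.ext_iff.1 hb x
        simp only [Set.mem_ofPred_eq, rhoMS, Multiset.mem_cons, Multiset.mem_add,
          Multiset.notMem_zero, or_false, Set.mem_Icc, hx]
        omega

theorem add_size_notMem_rhoMS_node {l : BT} (r : BT) (hl : l ≠ leaf) (a : ℤ) :
    a + l.size ∉ (node l r).rhoMS a := by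
  have := size_pos hl
  simp only [rhoMS, Multiset.mem_cons, Multiset.mem_add, not_or]
  refine ⟨by omega, fun h => ?_, fun h => ?_⟩
  · have := rhoMS_bounds h; omega
  · have := rhoMS_bounds h; omega

theorem not_ordConnected_rhoMS_of_not_linear {t : BT} (hlin : ¬ t.linear) (a : ℤ) :
    ¬ {x | x ∈ t.rhoMS a}.OrdConnected := by
  induction t generalizing a with
  | leaf => exact absurd trivial hlin
  | node l r ihl ihr =>
    intro hoc
    by_cases hl : l.linear
    · by_cases hr : r.linear
      · have hll : l ≠ leaf := by rintro rfl; exact hlin ⟨Or.inl rfl, hl, hr⟩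
        have hrl : r ≠ leaf := by rintro rfl; exact hlin ⟨Or.inr rfl, hl, hr⟩
        have hlo : a ∈ (node l r).rhoMS a := mem_rhoMS_self (by simp) a
        have hhi := (mem_rhoMS_right.1 (mem_rhoMS_self hrl (a + l.size + 1))).1
        have := size_pos hll
        exact add_size_notMem_rhoMS_node r hll a (hoc.out hlo hhi ⟨by omega, by omega⟩)
      · refine ihr hr (a + l.size + 1) ?_
        have : {x | x ∈ r.rhoMS (a + l.size + 1)} =
            {x | x ∈ (node l r).rhoMS a} ∩ Set.Ioi (a + l.size) :=
          Set.ext fun _ => mem_rhoMS_right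
        exact this ▸ hoc.inter Set.ordConnected_Ioi
    · refine ihl hl a ?_
      have : {x | x ∈ l.rhoMS a} = {x | x ∈ (node l r).rhoMS a} ∩ Set.Iio (a + l.size) :=
        Set.ext fun _ => mem_rhoMS_left
      exact this ▸ hoc.inter Set.ordConnected_Iio

theorem linear_iff_ordConnected_rhoMS (t : BT) (a : ℤ) :
    t.linear ↔ {x | x ∈ t.rhoMS a}.OrdConnected := by
  refine ⟨fun hlin => ?_, fun hoc => by_contra fun hlin =>
    not_ordConnected_rhoMS_of_not_linear hlin a hoc⟩
  by_cases ht : t = leaf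
  · subst ht
    simpa [rhoMS] using Set.ordConnected_empty
  · obtain ⟨b, hb⟩ := rhoMS_eq_Icc_of_linear hlin ht a
    exact hb ▸ Set.ordConnected_Icc

end BT

theorem Multiset.mem_list_sum {α : Type*} {l : List (Multiset α)} {a : α} :
    a ∈ l.sum ↔ ∃ s ∈ l, a ∈ s := by
  induction l with
  | nil => simp
  | cons s l ih => simp [ih]

namespace IndexedForest

theorem mem_rhoMS {F : IndexedForest} {x : ℤ} :
    x ∈ F.rhoMS ↔ ∃ p ∈ F.trees, x ∈ p.2.rhoMS p.1 := by
  simp [rhoMS, Multiset.mem_list_sum]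

theorem mem_lsuppMS_iff_mem_rhoMS {F : IndexedForest} {x : ℤ} :
    x ∈ F.lsuppMS ↔ x ∈ F.rhoMS := by
  simp [rhoMS, lsuppMS, Multiset.mem_list_sum, BT.mem_rhoMS_iff_mem_lsuppMS]

theorem mem_supp_of_mem_rhoMS {F : IndexedForest} {x : ℤ} (hx : x ∈ F.rhoMS) :
    x ∈ F.Supp := by
  obtain ⟨p, hp, hx⟩ := mem_rhoMS.1 hx
  exact ⟨p, hp, BT.rhoMS_bounds hx⟩

theorem length_trees_le_one_of_ordConnected {F : IndexedForest}
    (hoc : {x | x ∈ F.rhoMS}.OrdConnected) : F.trees.length ≤ 1 := by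
  obtain ⟨_ | ⟨p, _ | ⟨q, rest⟩⟩, hne, hgaps⟩ := F
  · simp
  · simp
  exfalso
  let R : ℤ × BT → ℤ × BT → Prop := fun p q => p.1 + (p.2.size : ℤ) + 1 ≤ q.1
  have : Trans R R R := ⟨fun huv hvw => by simp only [R] at *; omega⟩
  have hsep : ∀ r ∈ q :: rest, p.1 + (p.2.size : ℤ) + 1 ≤ r.1 := fun r hr =>
    List.IsChain.rel_cons (R := R) hgaps hr
  have hp : p.2 ≠ .leaf := hne p (by simp)
  have hq : q.2 ≠ .leaf := hne q (by simp)
  have := BT.size_pos hp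
  have := hsep q (by simp)
  have hm := hoc.out (mem_rhoMS.2 ⟨p, by simp, BT.mem_rhoMS_self hp p.1⟩)
    (mem_rhoMS.2 ⟨q, by simp, BT.mem_rhoMS_self hq q.1⟩)
    (show p.1 + (p.2.size : ℤ) ∈ Set.Icc p.1 q.1 from ⟨by omega, by omega⟩)
  obtain ⟨r, hr, hx⟩ := mem_rhoMS.1 hm
  have := BT.rhoMS_bounds hx
  rcases List.mem_cons.1 hr with rfl | hr
  · omega
  · have := hsep r hr; omega

theorem rhoMS_eq_of_trees_eq_singleton {F : IndexedForest} {a : ℤ} {t : BT}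
    (hF : F.trees = [(a, t)]) : F.rhoMS = t.rhoMS a := by
  simp [rhoMS, hF]

theorem exists_trees_eq_singleton_linear_iff (F : IndexedForest) :
    (∃ a t, F.trees = [(a, t)] ∧ t.linear) ↔
      {x | x ∈ F.rhoMS}.Nonempty ∧ {x | x ∈ F.rhoMS}.OrdConnected := by
  constructor
  · rintro ⟨a, t, hF, hlin⟩
    rw [rhoMS_eq_of_trees_eq_singleton hF]
    exact ⟨⟨a, BT.mem_rhoMS_self (F.nonempty (a, t) (by simp [hF])) a⟩,
      (BT.linear_iff_ordConnected_rhoMS t a).1 hlin⟩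
  · rintro ⟨⟨x, hx⟩, hoc⟩
    obtain ⟨p, hp, -⟩ := mem_rhoMS.1 hx
    obtain ⟨⟨a, t⟩, hF⟩ := List.length_eq_one_iff.1
      ((length_trees_le_one_of_ordConnected hoc).antisymm (List.length_pos_of_mem hp))
    rw [rhoMS_eq_of_trees_eq_singleton hF] at hoc
    exact ⟨a, t, hF, (BT.linear_iff_ordConnected_rhoMS t a).2 hoc⟩

end IndexedForest

/-- a positively supported indexed forest `F` is a single indexed
linear tree iff the support of `c(F)` is a (nonempty) interval of positive
integers, iff the left support of `F` is a (nonempty) interval of positive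
integers. -/
theorem linear_tree_characterization (F : IndexedForest)
    (hpos : ∀ i ∈ F.Supp, 1 ≤ i) :
    ((∃ a t, F.trees = [(a, t)] ∧ t.linear) ↔
      (∃ a b : ℤ, 1 ≤ a ∧ a ≤ b ∧ {i : ℤ | cOf F i ≠ 0} = Set.Icc a b)) ∧
    ((∃ a t, F.trees = [(a, t)] ∧ t.linear) ↔
      (∃ a b : ℤ, 1 ≤ a ∧ a ≤ b ∧ {i : ℤ | i ∈ F.lsuppMS} = Set.Icc a b)) := by
  have hsupp : {x | x ∈ F.rhoMS} ⊆ Set.Ici 1 := fun x hx =>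
    hpos x (IndexedForest.mem_supp_of_mem_rhoMS hx)
  have hc : {i | cOf F i ≠ 0} = {x | x ∈ F.rhoMS} := by
    ext
    simp [cOf]
  have hl : {i | i ∈ F.lsuppMS} = {x | x ∈ F.rhoMS} :=
    Set.ext fun _ => IndexedForest.mem_lsuppMS_iff_mem_rhoMS
  rw [hc, hl, (Multiset.finite_toSet _).exists_eq_Icc_iff hsupp,
    IndexedForest.exists_trees_eq_singleton_linear_iff]
  exact ⟨Iff.rfl, Iff.rfl⟩
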